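/- Maximum weight independent set restricted to weighted {2,3}-intersection graphs is NP-hard: there is a polynomial-time reduction from 3-dimensional matching. Concretely: given disjoint sets X, Y, Z with |X| = |Y| = |Z| = q and a collection S ⊆ X × Y × Z of triples, let S' be S together with all 2-element subsets of members of S, and let (G,w) be the weighted intersection graph of S' with weight |S| − 1 for the vertex of each set S ∈ S'. Then S contains q pairwise disjoint triples if and only if G has an independent set of weight at least 2q. -/

import Mathlib

open Finset

lemma triple_card {α : Type*} [DecidableEq α] {X Y Z : Finset α}
    (hXY : Disjoint X Y) (hXZ : Disjoint X Z) (hYZ : Disjoint Y Z)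
    {x y z : α} (hx : x ∈ X) (hy : y ∈ Y) (hz : z ∈ Z) :
    ({x, y, z} : Finset α).card = 3 := by
  have hxy : x ≠ y := fun h => Finset.disjoint_left.1 hXY hx (h ▸ hy)
  have hxz : x ≠ z := fun h => Finset.disjoint_left.1 hXZ hx (h ▸ hz)
  have hyz : y ≠ z := fun h => Finset.disjoint_left.1 hYZ hy (h ▸ hz)
  rw [Finset.card_insert_of_notMem (by simp [hxy, hxz]),
      Finset.card_insert_of_notMem (by simp [hyz]), Finset.card_singleton]

/-- Key equivalence of the NP-hardness reduction from 3-dimensional matching to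
maximum weight independent set on weighted `{2,3}`-intersection graphs.
Given disjoint `X, Y, Z` of size `q` and a collection `S` of triples (one element
from each), let `S'` be `S` together with all 2-element subsets of members of `S`,
with each set `s ∈ S'` weighted `|s| - 1`.  Then `S` contains `q` pairwise disjoint
triples iff the intersection graph of `S'` has an independent set (a pairwise
disjoint subcollection) of total weight at least `2q`. -/
theorem threeDM_iff_heavy_independent_set {α : Type*} [DecidableEq α]
    (q : ℕ) (X Y Z : Finset α)
    (hXY : Disjoint X Y) (hXZ : Disjoint X Z) (hYZ : Disjoint Y Z)
    (hX : X.card = q) (hY : Y.card = q) (hZ : Z.card = q)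
    (S S' : Finset (Finset α))
    (hS : ∀ s ∈ S, ∃ x ∈ X, ∃ y ∈ Y, ∃ z ∈ Z, s = {x, y, z})
    (hS' : ∀ t : Finset α, t ∈ S' ↔ t ∈ S ∨ ∃ s ∈ S, t ⊆ s ∧ t.card = 2) :
    (∃ M ⊆ S, M.card = q ∧ ∀ s₁ ∈ M, ∀ s₂ ∈ M, s₁ ≠ s₂ → Disjoint s₁ s₂) ↔
    (∃ I ⊆ S', (∀ s₁ ∈ I, ∀ s₂ ∈ I, s₁ ≠ s₂ → Disjoint s₁ s₂) ∧
      2 * q ≤ ∑ s ∈ I, (s.card - 1)) := by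
  have hScard : ∀ s ∈ S, s.card = 3 := by
    intro s hs
    obtain ⟨x, hx, y, hy, z, hz, rfl⟩ := hS s hs
    exact triple_card hXY hXZ hYZ hx hy hz
  have hSsub : ∀ s ∈ S, s ⊆ X ∪ Y ∪ Z := by
    intro s hs
    obtain ⟨x, hx, y, hy, z, hz, rfl⟩ := hS s hs
    intro a ha
    simp only [Finset.mem_insert, Finset.mem_singleton] at ha
    rcases ha with rfl | rfl | rfl <;> simp [hx, hy, hz]
  constructor
  · rintro ⟨M, hMS, hMcard, hMdisj⟩
    refine ⟨M, fun s hs => (hS' s).2 (Or.inl (hMS hs)), hMdisj, ?_⟩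
    have : ∑ s ∈ M, (s.card - 1) = ∑ s ∈ M, 2 :=
      Finset.sum_congr rfl fun s hs => by rw [hScard s (hMS hs)]
    rw [this, Finset.sum_const, hMcard, smul_eq_mul, mul_comm]
  · rintro ⟨I, hIS', hIdisj, hw⟩
    -- facts about cards of members of I
    have hcards : ∀ s ∈ I, (s.card = 2 ∨ s.card = 3) ∧ s ⊆ X ∪ Y ∪ Z := by
      intro s hs
      rcases (hS' s).1 (hIS' hs) with h | ⟨t, ht, hst, hc⟩
      · exact ⟨Or.inr (hScard s h), hSsub s h⟩
      · exact ⟨Or.inl hc, hst.trans (hSsub t ht)⟩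
    set n := I.card with hn
    set C := ∑ s ∈ I, s.card with hC
    have hCle : C ≤ 3 * q := by
      have h1 : C = (I.biUnion id).card := by
        rw [Finset.card_biUnion]
        · simp [hC]
        · intro x hx y hy hxy; exact hIdisj x hx y hy hxy
      have h2 : I.biUnion id ⊆ X ∪ Y ∪ Z := by
        intro a ha
        simp only [Finset.mem_biUnion, id] at ha
        obtain ⟨s, hs, has⟩ := ha
        exact (hcards s hs).2 has
      have h3 : (X ∪ Y ∪ Z).card ≤ 3 * q := by
        calc (X ∪ Y ∪ Z).card ≤ X.card + Y.card + Z.card := by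
              exact le_trans (Finset.card_union_le _ _)
                (by exact Nat.add_le_add_right (Finset.card_union_le X Y) _)
          _ = 3 * q := by omega
      exact h1 ▸ le_trans (Finset.card_le_card h2) h3
    have hsum : 2 * q + n ≤ C := by
      have : ∑ s ∈ I, (s.card - 1) + n = C := by
        rw [hn, hC, Finset.card_eq_sum_ones, ← Finset.sum_add_distrib]
        refine Finset.sum_congr rfl fun s hs => ?_
        rcases (hcards s hs).1 with h | h <;> omega
      omega
    have hCle3n : C ≤ 3 * n := by
      calc C ≤ ∑ s ∈ I, 3 := Finset.sum_le_sum fun s hs => by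
            rcases (hcards s hs).1 with h | h <;> omega
        _ = 3 * n := by rw [Finset.sum_const, hn, smul_eq_mul, mul_comm]
    have hnq : n = q := by omega
    have hCeq : C = 3 * q := by omega
    have hall3 : ∀ s ∈ I, s.card = 3 := by
      by_contra h
      push_neg at h
      obtain ⟨s0, hs0, hne⟩ := h
      have : C < ∑ s ∈ I, 3 := by
        apply Finset.sum_lt_sum
        · intro s hs; rcases (hcards s hs).1 with h | h <;> omega
        · exact ⟨s0, hs0, by rcases (hcards s0 hs0).1 with h | h <;> omega⟩
      rw [Finset.sum_const, smul_eq_mul] at this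
      omega
    refine ⟨I, ?_, hnq, hIdisj⟩
    intro s hs
    rcases (hS' s).1 (hIS' hs) with h | ⟨t, ht, hst, hc⟩
    · exact h
    · exact absurd (hall3 s hs) (by omega)
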